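/- arXiv:1709.00442 — 2 statements merged into one kernel-verified Lean document; each statement's English description precedes it below -/
import Mathlib

section
/- (Recursion for 𝒟) For every N ≥ 1 and every u ∈ ℂ: 𝒟^(N+1)(u) = c(u)² E⁺₊ ⊗ 𝒜^(N)(u) + a(u)c(u) E⁻₊ ⊗ ℬ^(N)(u) + a(u)c(u) E⁺₋ ⊗ 𝒞^(N)(u) + b(u)² E⁺₊ ⊗ 𝒟^(N)(u) + a(u)² E⁻₋ ⊗ 𝒟^(N)(u), where the first tensor factor acts on the new site N+1 and the size-N operators act on sites N,…,1. -/
noncomputable section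
open Complex Matrix

/-- Spin configurations of a chain of `N` sites: `true` encodes `v₊`, `false` encodes `v₋`.
The site with label `i ∈ {1,…,N}` corresponds to the index `i-1 : Fin N`
(so the leftmost site `N` is the index `N-1`). -/
abbrev Conf (N : ℕ) := Fin N → Bool

/-- The combinatorial-point parameter `η = 2πi/3`. -/
def ηc : ℂ := 2 * (Real.pi : ℂ) * Complex.I / 3

/-- `a(u) = sinh(u+η)/sinh η`. -/
def aF (u : ℂ) : ℂ := Complex.sinh (u + ηc) / Complex.sinh ηc
/-- `b(u) = sinh(u)/sinh η`. -/
def bF (u : ℂ) : ℂ := Complex.sinh u / Complex.sinh ηc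
/-- `c(u) = 1`. -/
def cF (_ : ℂ) : ℂ := 1
/-- `d(u) = sinh(u-η)/sinh η`. -/
def dF (u : ℂ) : ℂ := Complex.sinh (u - ηc) / Complex.sinh ηc
/-- The R-matrix `R(u)` on `V⊗V` in the ordered basis `(v₊⊗v₊, v₊⊗v₋, v₋⊗v₊, v₋⊗v₋)`:
`[[a,0,0,0],[0,b,c,0],[0,c,b,0],[0,0,0,a]]`. -/
def Rm (u : ℂ) : Matrix (Bool × Bool) (Bool × Bool) ℂ :=
  Matrix.of fun o i =>
    if o = i then (if o.1 = o.2 then aF u else bF u)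
    else if o.1 = i.2 ∧ o.2 = i.1 ∧ o.1 ≠ o.2 then cF u
    else 0

/-- The boundary K-matrix `K⁻(u) = diag(d(u), -a(u))` in the basis `(v₊, v₋)`. -/
def Km (u : ℂ) : Matrix Bool Bool ℂ :=
  Matrix.of fun o i => if o = i then (if o then dF u else -aF u) else 0

/-- `R₀ᵢ(u)`: the matrix `R(u)` applied to `V₀ ⊗ Vᵢ` (auxiliary space first), identity
elsewhere, on `V₀ ⊗ V^⊗N`; here the site with label `i` is the index `i-1`. -/
def R0i (N : ℕ) (u : ℂ) (i : Fin N) :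
    Matrix (Bool × Conf N) (Bool × Conf N) ℂ :=
  Matrix.of fun x y =>
    if ∀ j, j ≠ i → x.2 j = y.2 j then Rm u (x.1, x.2 i) (y.1, y.2 i) else 0

/-- `Rᵢ₀(u)`: the matrix `R(u)` applied to `Vᵢ ⊗ V₀` (auxiliary space second), identity
elsewhere, on `V₀ ⊗ V^⊗N`. -/
def Ri0 (N : ℕ) (u : ℂ) (i : Fin N) :
    Matrix (Bool × Conf N) (Bool × Conf N) ℂ :=
  Matrix.of fun x y =>
    if ∀ j, j ≠ i → x.2 j = y.2 j then Rm u (x.2 i, x.1) (y.2 i, y.1) else 0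

/-- `T^(N)(u) = R₀₁(u) R₀₂(u) ⋯ R₀N(u)`. -/
def Tmono (N : ℕ) (u : ℂ) : Matrix (Bool × Conf N) (Bool × Conf N) ℂ :=
  (List.ofFn fun i : Fin N => R0i N u i).prod

/-- `T̄^(N)(u) = R_{N0}(u) ⋯ R_{20}(u) R_{10}(u)`. -/
def Tbar (N : ℕ) (u : ℂ) : Matrix (Bool × Conf N) (Bool × Conf N) ℂ :=
  (List.ofFn fun i : Fin N => Ri0 N u i).reverse.prod

/-- `K₀⁻(u)`: the matrix `K⁻(u)` acting on the auxiliary space `V₀`, identity on `V^⊗N`. -/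
def K0m (N : ℕ) (u : ℂ) : Matrix (Bool × Conf N) (Bool × Conf N) ℂ :=
  Matrix.of fun x y => if x.2 = y.2 then Km u x.1 y.1 else 0

/-- The double-row monodromy matrix `U^(N)(u) = T̄^(N)(u) K₀⁻(u) T^(N)(u)`. -/
def Umono (N : ℕ) (u : ℂ) : Matrix (Bool × Conf N) (Bool × Conf N) ℂ :=
  Tbar N u * K0m N u * Tmono N u

/-- `𝒜^(N)(u)`: the `(v₊, v₊)` auxiliary-space block of `U^(N)(u)`. -/
def Aop (N : ℕ) (u : ℂ) : Matrix (Conf N) (Conf N) ℂ :=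
  Matrix.of fun s t => Umono N u (true, s) (true, t)
/-- `ℬ^(N)(u)`: the `(v₊, v₋)` auxiliary-space block of `U^(N)(u)`. -/
def Bop (N : ℕ) (u : ℂ) : Matrix (Conf N) (Conf N) ℂ :=
  Matrix.of fun s t => Umono N u (true, s) (false, t)
/-- `𝒞^(N)(u)`: the `(v₋, v₊)` auxiliary-space block of `U^(N)(u)`. -/
def Cop (N : ℕ) (u : ℂ) : Matrix (Conf N) (Conf N) ℂ :=
  Matrix.of fun s t => Umono N u (false, s) (true, t)
/-- `𝒟^(N)(u)`: the `(v₋, v₋)` auxiliary-space block of `U^(N)(u)`. -/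
def Dop (N : ℕ) (u : ℂ) : Matrix (Conf N) (Conf N) ℂ :=
  Matrix.of fun s t => Umono N u (false, s) (false, t)

/-- The transfer matrix
`t^(N)(u) = (sinh u / sinh η) 𝒜^(N)(u) - (sinh(u+2η)/sinh η) 𝒟^(N)(u)`. -/
def tOp (N : ℕ) (u : ℂ) : Matrix (Conf N) (Conf N) ℂ :=
  (Complex.sinh u / Complex.sinh ηc) • Aop N u
    - (Complex.sinh (u + 2 * ηc) / Complex.sinh ηc) • Dop N u

/-- The pseudovacuum `Ω^(N) = v₊ ⊗ ⋯ ⊗ v₊`. -/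
def Omega (N : ℕ) : Conf N → ℂ := fun s => if ∀ j, s j = true then 1 else 0

/-- `E^ε ⊗ X : V^⊗(n+2) → V^⊗(n+1)`: the linear functional `E^ε : V → ℂ`, `v_ε ↦ 1`
(zero on the other basis vector), applied to the leftmost site `N = n+2`, tensored with
the operator `X` on the remaining sites `n+1,…,1`.  Here `e = true` encodes `ε = +`. -/
def Etens (n : ℕ) (e : Bool) (X : Matrix (Conf (n + 1)) (Conf (n + 1)) ℂ) :
    Matrix (Conf (n + 1)) (Conf (n + 2)) ℂ :=
  Matrix.of fun o i =>
    (if i (Fin.last (n + 1)) = e then 1 else 0) * X o (fun j => i (Fin.castSucc j))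

/-- `F ⊗ X` : the one-site operator `F` applied to the leftmost site `N+1` of a chain of
`N+1` sites, tensored with the operator `X` on the remaining sites `N,…,1`. -/
def siteTens (N : ℕ) (F : Matrix Bool Bool ℂ) (X : Matrix (Conf N) (Conf N) ℂ) :
    Matrix (Conf (N + 1)) (Conf (N + 1)) ℂ :=
  Matrix.of fun o i =>
    F (o (Fin.last N)) (i (Fin.last N)) * X (fun j => o (Fin.castSucc j)) (fun j => i (Fin.castSucc j))

/-- `E^ε_{ε'} : V → V` sends `v_ε ↦ v_{ε'}` and the other basis vector to `0`
(`true` encodes `+`). -/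
def Eop (e e' : Bool) : Matrix Bool Bool ℂ :=
  Matrix.of fun o i => if i = e ∧ o = e' then 1 else 0

/-!
Peeling off the new site, `T^(N+1) = (T^(N) ⊗ 1) R₀,N+1` and `T̄^(N+1) = R_{N+1,0} (T̄^(N) ⊗ 1)`,
while `K₀⁻` only acts on `V₀`; hence `U^(N+1) = R_{N+1,0} (U^(N) ⊗ 1) R₀,N+1`. Taking the
`(v₋, v₋)` auxiliary entry and summing over the intermediate auxiliary and new-site states,
for each pair of spins on the new site only the products of `R`-matrix entries listed in the
claim survive, weighting the blocks `𝒜, ℬ, 𝒞, 𝒟` of `U^(N)`.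
-/

open scoped Kronecker

section SplitLast

def splitLastEquiv (ι σ : Type*) (N : ℕ) : (ι × (Fin N → σ)) × σ ≃ ι × (Fin (N + 1) → σ) :=
  (Equiv.prodAssoc _ _ _).trans <|
    Equiv.prodCongr (Equiv.refl ι) <| (Equiv.prodComm _ _).trans (Fin.snocEquiv fun _ => σ)

variable {ι σ R : Type*} {N : ℕ}

@[simp]
lemma splitLastEquiv_symm_apply (x : ι × (Fin (N + 1) → σ)) :
    (splitLastEquiv ι σ N).symm x = ((x.1, Fin.init x.2), x.2 (Fin.last N)) :=
  rfl

lemma sum_split_last [Fintype ι] [Fintype σ] {M : Type*} [AddCommMonoid M]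
    (g : ι × (Fin (N + 1) → σ) → M) :
    ∑ x, g x = ∑ a, ∑ γ, ∑ r, g (a, Fin.snoc r γ) := by
  rw [← (splitLastEquiv ι σ N).sum_comp]
  simp only [Fintype.sum_prod_type]
  exact Finset.sum_congr rfl fun a _ => Finset.sum_comm

lemma forall_ne_castSucc_iff (s t : Fin (N + 1) → σ) (i : Fin N) :
    (∀ j, j ≠ i.castSucc → s j = t j) ↔
      s (Fin.last N) = t (Fin.last N) ∧ ∀ k, k ≠ i → Fin.init s k = Fin.init t k := by
  refine ⟨fun h => ⟨h _ (Fin.castSucc_lt_last i).ne', fun k hk => h _ (by simpa using hk)⟩, ?_⟩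
  rintro ⟨hlast, hinit⟩ j
  induction j using Fin.lastCases with
  | last => exact fun _ => hlast
  | cast k => exact fun hk => hinit k (by simpa using hk)

lemma forall_ne_last_iff (s t : Fin (N + 1) → σ) :
    (∀ j, j ≠ Fin.last N → s j = t j) ↔ Fin.init s = Fin.init t := by
  refine ⟨fun h => funext fun k => h _ (Fin.castSucc_lt_last k).ne, fun h j hj => ?_⟩
  obtain ⟨k, rfl⟩ := Fin.exists_castSucc_eq.2 hj
  exact congrFun h k

variable [Fintype ι] [DecidableEq ι] [Fintype σ] [DecidableEq σ] [CommSemiring R]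

def extendId :
    Matrix (ι × (Fin N → σ)) (ι × (Fin N → σ)) R →*
      Matrix (ι × (Fin (N + 1) → σ)) (ι × (Fin (N + 1) → σ)) R where
  toFun M := reindex (splitLastEquiv ι σ N) (splitLastEquiv ι σ N) (M ⊗ₖ 1)
  map_one' := by simp
  map_mul' M P := by
    simp only [reindex_apply, submatrix_mul_equiv, ← mul_kronecker_mul, mul_one]

lemma extendId_apply (M : Matrix (ι × (Fin N → σ)) (ι × (Fin N → σ)) R)
    (x y : ι × (Fin (N + 1) → σ)) :
    extendId M x y =
      if x.2 (Fin.last N) = y.2 (Fin.last N) then M (x.1, Fin.init x.2) (y.1, Fin.init y.2)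
      else 0 := by
  simp [extendId, one_apply]

def localLast (N : ℕ) (p : Matrix (ι × σ) (ι × σ) R) :
    Matrix (ι × (Fin (N + 1) → σ)) (ι × (Fin (N + 1) → σ)) R :=
  of fun x y =>
    if ∀ j, j ≠ Fin.last N → x.2 j = y.2 j then p (x.1, x.2 (Fin.last N)) (y.1, y.2 (Fin.last N))
    else 0

lemma localLast_mul_extendId_mul_localLast (p q : Matrix (ι × σ) (ι × σ) R)
    (M : Matrix (ι × (Fin N → σ)) (ι × (Fin N → σ)) R) (b c : ι) (o i : Fin (N + 1) → σ) :
    (localLast N p * extendId M * localLast N q) (b, o) (c, i) =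
      ∑ β, ∑ γ, ∑ α, p (b, o (Fin.last N)) (α, γ) * M (α, Fin.init o) (β, Fin.init i) *
        q (β, γ) (c, i (Fin.last N)) := by
  simp only [mul_apply, Finset.sum_mul, sum_split_last, localLast, extendId_apply, of_apply,
    Fin.snoc_last, Fin.init_snoc, forall_ne_last_iff]
  simp only [ite_mul, mul_ite, zero_mul, mul_zero, Finset.sum_ite_irrel,
    Finset.sum_const_zero, Finset.sum_ite_eq, Finset.sum_ite_eq', Finset.mem_univ, if_true]

end SplitLast

lemma siteTens_apply (N : ℕ) (F : Matrix Bool Bool ℂ) (X : Matrix (Conf N) (Conf N) ℂ)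
    (o i : Conf (N + 1)) :
    siteTens N F X o i = F (o (Fin.last N)) (i (Fin.last N)) * X (Fin.init o) (Fin.init i) :=
  rfl

lemma R0i_castSucc (N : ℕ) (u : ℂ) (i : Fin N) :
    R0i (N + 1) u i.castSucc = extendId (R0i N u i) := by
  ext ⟨b, s⟩ ⟨c, t⟩
  simp only [R0i, extendId_apply, of_apply, forall_ne_castSucc_iff, ite_and]
  rfl

lemma Ri0_castSucc (N : ℕ) (u : ℂ) (i : Fin N) :
    Ri0 (N + 1) u i.castSucc = extendId (Ri0 N u i) := by
  ext ⟨b, s⟩ ⟨c, t⟩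
  simp only [Ri0, extendId_apply, of_apply, forall_ne_castSucc_iff, ite_and]
  rfl

lemma K0m_succ (N : ℕ) (u : ℂ) : K0m (N + 1) u = extendId (K0m N u) := by
  ext ⟨b, s⟩ ⟨c, t⟩
  simp only [K0m, extendId_apply, of_apply, ← ite_and]
  congr 1
  rw [← (Fin.snocEquiv fun _ => Bool).symm.injective.eq_iff]
  simp

lemma R0i_last (N : ℕ) (u : ℂ) : R0i (N + 1) u (Fin.last N) = localLast N (Rm u) :=
  rfl

lemma Ri0_last (N : ℕ) (u : ℂ) :
    Ri0 (N + 1) u (Fin.last N) = localLast N ((Rm u).submatrix Prod.swap Prod.swap) :=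
  rfl

lemma Tmono_succ (N : ℕ) (u : ℂ) :
    Tmono (N + 1) u = extendId (Tmono N u) * R0i (N + 1) u (Fin.last N) := by
  simp only [Tmono, List.ofFn_succ', List.concat_eq_append, List.prod_append, List.prod_singleton,
    R0i_castSucc, map_list_prod, List.map_ofFn]
  rfl

lemma Tbar_succ (N : ℕ) (u : ℂ) :
    Tbar (N + 1) u = Ri0 (N + 1) u (Fin.last N) * extendId (Tbar N u) := by
  simp only [Tbar, List.ofFn_succ', List.concat_eq_append, List.reverse_append,
    List.reverse_singleton, List.singleton_append, List.prod_cons, Ri0_castSucc, map_list_prod,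
    List.map_reverse, List.map_ofFn]
  rfl

lemma Umono_succ (N : ℕ) (u : ℂ) :
    Umono (N + 1) u = localLast N ((Rm u).submatrix Prod.swap Prod.swap) * extendId (Umono N u) *
      localLast N (Rm u) := by
  simp only [Umono, Tbar_succ, K0m_succ, Tmono_succ, map_mul, Ri0_last, R0i_last, mul_assoc]

theorem D_recursion_general (N : ℕ) (u : ℂ) :
    Dop (N + 1) u
      = cF u ^ 2 • siteTens N (Eop true true) (Aop N u)
        + (aF u * cF u) • siteTens N (Eop false true) (Bop N u)
        + (aF u * cF u) • siteTens N (Eop true false) (Cop N u)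
        + bF u ^ 2 • siteTens N (Eop true true) (Dop N u)
        + aF u ^ 2 • siteTens N (Eop false false) (Dop N u) := by
  ext o i
  change Umono (N + 1) u (false, o) (false, i) = _
  rw [Umono_succ, localLast_mul_extendId_mul_localLast]
  simp only [Matrix.add_apply, Matrix.smul_apply, siteTens_apply, Eop, Aop, Bop, Cop, Dop,
    of_apply]
  rcases o (Fin.last N) <;> rcases i (Fin.last N) <;> simp [Rm, cF] <;> ring

/-- recursion for 𝒟: for every `N ≥ 1` and every `u ∈ ℂ`,
`𝒟^(N+1)(u) = c² E⁺₊ ⊗ 𝒜^(N) + ac E⁻₊ ⊗ ℬ^(N) + ac E⁺₋ ⊗ 𝒞^(N) + b² E⁺₊ ⊗ 𝒟^(N)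
  + a² E⁻₋ ⊗ 𝒟^(N)`, the first factor acting on the new (leftmost) site `N+1`. -/
theorem D_recursion (N : ℕ) (hN : 1 ≤ N) (u : ℂ) :
    Dop (N + 1) u
      = cF u ^ 2 • siteTens N (Eop true true) (Aop N u)
        + (aF u * cF u) • siteTens N (Eop false true) (Bop N u)
        + (aF u * cF u) • siteTens N (Eop true false) (Cop N u)
        + bF u ^ 2 • siteTens N (Eop true true) (Dop N u)
        + aF u ^ 2 • siteTens N (Eop false false) (Dop N u) :=
  D_recursion_general N u
end
end

section
/- (Pseudovacuum eigenvalues) For every N ≥ 1 and every u ∈ ℂ, the pseudovacuum satisfies 𝒜^(N)(u) Ω^(N) = Δ₊^(N)(u) Ω^(N) and [sinh(2u+η) 𝒟^(N)(u) − sinh(η) 𝒜^(N)(u)] Ω^(N) = Δ₋^(N)(u) Ω^(N), with the explicit values Δ₊^(N)(u) = a(u)^{2N} sinh(u−η)/sinh(η) and Δ₋^(N)(u) = −b(u)^{2N} sinh(2u) sinh(u+2η)/sinh(η). -/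
noncomputable section
open Complex Matrix

/-!
Since `R(u)` is symmetric and invariant under exchanging its two tensor factors, `T̄ = Tᵀ`, so
`U = Tᵀ K⁻ T` with `K⁻` diagonal. The six-vertex weights conserve the number of `v₊` factors
(ice rule), and two columns of `T` are explicit: `v₊ ⊗ Ω` is an eigenvector with eigenvalue
`a^N`, while `T (v₋ ⊗ Ω)` is `b^N (v₋ ⊗ Ω)` plus, for each site index `k : Fin N`,
`a^k b^(N-1-k)` times the state with auxiliary spin `v₊` and site `k` flipped. Hence
`𝒜 Ω = a^N d a^N Ω`, and `𝒟 Ω` is `-a b^(2N) + d ∑ₖ a^(2k) b^(2(N-1-k))` times `Ω`. The stated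
values follow from `(a² - b²) sinh η = sinh(2u+η)`, the geometric sum, and
`sinh(2u+η) sinh(u+η) + sinh(u-η) sinh η = sinh 2u sinh(u+2η)`.
-/

namespace Matrix

variable {ι R : Type*} [Fintype ι] [DecidableEq ι]

theorem list_prod_apply_eq_zero_of_ne [Semiring R] {κ : Type*} (f : ι → κ)
    (l : List (Matrix ι ι R)) (hl : ∀ M ∈ l, ∀ x y, f x ≠ f y → M x y = 0) :
    ∀ x y, f x ≠ f y → l.prod x y = 0 := by
  induction l with
  | nil => intro x y hxy; exact one_apply_ne fun h => hxy (congrArg f h)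
  | cons M l ih =>
    intro x y hxy
    rw [List.prod_cons, mul_apply]
    refine Finset.sum_eq_zero fun z _ => ?_
    by_cases hxz : f x = f z
    · rw [ih (fun M hM => hl M (List.mem_cons_of_mem _ hM)) z y (hxz ▸ hxy), mul_zero]
    · rw [hl M List.mem_cons_self x z hxz, zero_mul]

theorem list_prod_mulVec_of_mulVec_eq_smul [CommSemiring R] (l : List (Matrix ι ι R))
    {v : ι → R} {c : R} (hl : ∀ M ∈ l, M *ᵥ v = c • v) : l.prod *ᵥ v = c ^ l.length • v := by
  induction l with
  | nil => simp
  | cons M l ih =>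
    rw [List.prod_cons, ← mulVec_mulVec, ih fun M hM => hl M (List.mem_cons_of_mem _ hM),
      mulVec_smul, hl M List.mem_cons_self, smul_smul, List.length_cons, pow_succ]

end Matrix

def allUp (N : ℕ) : Conf N := fun _ => true

@[simp]
theorem allUp_apply {N : ℕ} (i : Fin N) : allUp N i = true := rfl

@[simp]
theorem update_allUp_true {N : ℕ} (i : Fin N) : Function.update (allUp N) i true = allUp N :=
  Function.update_eq_self i _

def oneDown {N : ℕ} (k : Fin N) : Conf N := Function.update (allUp N) k false

def upCount {N : ℕ} (s : Conf N) : ℕ := ∑ j, (s j).toNat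

theorem oneDown_injective {N : ℕ} : Function.Injective (oneDown (N := N)) := by
  intro k k' h
  by_contra hne
  simpa [oneDown, Function.update_apply, hne, allUp] using congrFun h k

theorem upCount_allUp (N : ℕ) : upCount (allUp N) = N := by simp [upCount]

theorem upCount_oneDown {N : ℕ} (k : Fin N) : upCount (oneDown k) = N - 1 := by
  rw [upCount, ← Finset.add_sum_erase _ _ (Finset.mem_univ k)]
  have hoff : ∀ j ∈ Finset.univ.erase k, (oneDown k j).toNat = 1 := fun j hj => by
    simp [oneDown, allUp, Finset.ne_of_mem_erase hj]
  rw [Finset.sum_congr rfl hoff]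
  simp [oneDown]

theorem upCount_lt_of_ne_allUp {N : ℕ} {s : Conf N} (hs : s ≠ allUp N) : upCount s < N := by
  obtain ⟨j, hj⟩ : ∃ j, s j ≠ true := by
    by_contra! h
    exact hs (funext h)
  calc upCount s < ∑ _j : Fin N, 1 :=
        Finset.sum_lt_sum (fun i _ => Bool.toNat_le _) ⟨j, Finset.mem_univ j, by simp_all⟩
    _ = N := by simp

theorem Omega_eq_single (N : ℕ) : Omega N = Pi.single (allUp N) 1 := by
  funext s
  simp [Omega, Pi.single_apply, funext_iff]

theorem Rm_apply_eq_zero_of_toNat_add_ne (u : ℂ) {p q r s : Bool}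
    (h : p.toNat + q.toNat ≠ r.toNat + s.toNat) : Rm u (p, q) (r, s) = 0 := by
  cases p <;> cases q <;> cases r <;> cases s <;> simp_all [Rm]

theorem Rm_transpose (u : ℂ) : (Rm u)ᵀ = Rm u := by
  ext ⟨p, q⟩ ⟨r, s⟩
  cases p <;> cases q <;> cases r <;> cases s <;> simp [Rm]

theorem Rm_apply_swap (u : ℂ) (p q r s : Bool) : Rm u (q, p) (s, r) = Rm u (p, q) (r, s) := by
  cases p <;> cases q <;> cases r <;> cases s <;> simp [Rm]

theorem R0i_mulVec_single {N : ℕ} (u : ℂ) (i : Fin N) (q : Bool) (t : Conf N) :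
    R0i N u i *ᵥ Pi.single (q, t) 1 =
      ∑ pr : Bool × Bool, Rm u pr (q, t i) • Pi.single (pr.1, Function.update t i pr.2) 1 := by
  rw [Matrix.mulVec_single_one]
  funext ⟨p, s⟩
  simp only [Matrix.col_apply, R0i, Matrix.of_apply, Finset.sum_apply, Pi.smul_apply,
    Pi.single_apply, Prod.ext_iff, Function.eq_update_iff, smul_eq_mul, mul_ite, mul_one, mul_zero]
  split_ifs with hoff
  · have hsel (pr : Bool × Bool) :
        (p = pr.1 ∧ s i = pr.2 ∧ ∀ j, j ≠ i → s j = t j) ↔ (p, s i) = pr := by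
      simpa [Prod.ext_iff] using fun _ _ => hoff
    simp only [hsel, Finset.sum_ite_eq, Finset.mem_univ, if_true]
  · simp [hoff]

def totalUpCount {N : ℕ} (x : Bool × Conf N) : ℕ := x.1.toNat + upCount x.2

theorem R0i_apply_eq_zero_of_totalUpCount_ne {N : ℕ} (u : ℂ) (i : Fin N)
    {x y : Bool × Conf N} (h : totalUpCount x ≠ totalUpCount y) : R0i N u i x y = 0 := by
  simp only [R0i, Matrix.of_apply]
  split_ifs with hoff
  · refine Rm_apply_eq_zero_of_toNat_add_ne u fun hloc => h ?_
    have hrest : ∑ j ∈ Finset.univ.erase i, (x.2 j).toNat =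
        ∑ j ∈ Finset.univ.erase i, (y.2 j).toNat :=
      Finset.sum_congr rfl fun j hj => by rw [hoff j (Finset.ne_of_mem_erase hj)]
    simp only [totalUpCount, upCount, ← Finset.add_sum_erase _ _ (Finset.mem_univ i), hrest]
    omega
  · rfl

theorem R0i_mulVec_single_true_allUp {N : ℕ} (u : ℂ) (i : Fin N) :
    R0i N u i *ᵥ Pi.single (true, allUp N) 1 = aF u • Pi.single (true, allUp N) 1 := by
  rw [R0i_mulVec_single]
  simp [Fintype.sum_prod_type, Rm]

theorem R0i_mulVec_single_false_allUp {N : ℕ} (u : ℂ) (i : Fin N) :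
    R0i N u i *ᵥ Pi.single (false, allUp N) 1 =
      bF u • Pi.single (false, allUp N) 1 + Pi.single (true, oneDown i) 1 := by
  rw [R0i_mulVec_single]
  simp [Fintype.sum_prod_type, Rm, cF, oneDown, add_comm]

theorem R0i_mulVec_single_true_oneDown {N : ℕ} (u : ℂ) {i k : Fin N} (hki : k ≠ i) :
    R0i N u i *ᵥ Pi.single (true, oneDown k) 1 = aF u • Pi.single (true, oneDown k) 1 := by
  have hi : oneDown k i = true := by simp [oneDown, allUp, Ne.symm hki]
  rw [R0i_mulVec_single]
  have hfix : Function.update (oneDown k) i true = oneDown k :=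
    Function.update_eq_iff.2 ⟨hi.symm, fun _ _ => rfl⟩
  simp [Fintype.sum_prod_type, Rm, hi, hfix]

theorem Tmono_apply_eq_zero_of_totalUpCount_ne {N : ℕ} (u : ℂ) {x y : Bool × Conf N}
    (h : totalUpCount x ≠ totalUpCount y) : Tmono N u x y = 0 := by
  refine Matrix.list_prod_apply_eq_zero_of_ne totalUpCount _ (fun M hM x y hxy => ?_) x y h
  obtain ⟨i, rfl⟩ := List.mem_ofFn.mp hM
  exact R0i_apply_eq_zero_of_totalUpCount_ne u i hxy

theorem Tmono_mulVec_single_true_allUp (N : ℕ) (u : ℂ) :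
    Tmono N u *ᵥ Pi.single (true, allUp N) 1 = aF u ^ N • Pi.single (true, allUp N) 1 := by
  rw [Tmono, Matrix.list_prod_mulVec_of_mulVec_eq_smul, List.length_ofFn]
  intro M hM
  obtain ⟨i, rfl⟩ := List.mem_ofFn.mp hM
  exact R0i_mulVec_single_true_allUp u i

/-- The flip at site `f p` is created by the `p`-th factor: the factors acting before it (to its
right) see `v₋ ⊗ Ω` and contribute `b`, those acting after it see a flipped state and contribute
`a`. -/
theorem ofFn_R0i_prod_mulVec_single_false_allUp {N : ℕ} (u : ℂ) :
    ∀ {n : ℕ} (f : Fin n → Fin N), Function.Injective f →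
      (List.ofFn fun p => R0i N u (f p)).prod *ᵥ Pi.single (false, allUp N) 1 =
        bF u ^ n • Pi.single (false, allUp N) 1 +
          ∑ p : Fin n, (aF u ^ (p : ℕ) * bF u ^ (n - 1 - p)) • Pi.single (true, oneDown (f p)) 1
  | 0, _, _ => by simp only [List.ofFn_zero, List.prod_nil, Matrix.one_mulVec]; simp
  | n + 1, f, hf => by
    have hne (p : Fin n) : f p.succ ≠ f 0 := hf.ne (Fin.succ_ne_zero p)
    rw [List.ofFn_succ, List.prod_cons, ← Matrix.mulVec_mulVec,
      ofFn_R0i_prod_mulVec_single_false_allUp u (fun p => f p.succ)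
        (hf.comp (Fin.succ_injective n)),
      Matrix.mulVec_add, Matrix.mulVec_smul, Matrix.mulVec_sum, R0i_mulVec_single_false_allUp,
      Fin.sum_univ_succ]
    simp only [Matrix.mulVec_smul, R0i_mulVec_single_true_oneDown u (hne _),
      Fin.val_zero, Fin.val_succ, smul_smul, smul_add, pow_succ]
    rw [add_assoc]
    congr 2
    · simp
    · refine Finset.sum_congr rfl fun p _ => ?_
      rw [show n + 1 - 1 - ((p : ℕ) + 1) = n - 1 - p by omega, mul_right_comm]

theorem Tmono_mulVec_single_false_allUp (N : ℕ) (u : ℂ) :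
    Tmono N u *ᵥ Pi.single (false, allUp N) 1 =
      bF u ^ N • Pi.single (false, allUp N) 1 +
        ∑ k : Fin N, (aF u ^ (k : ℕ) * bF u ^ (N - 1 - k)) • Pi.single (true, oneDown k) 1 :=
  ofFn_R0i_prod_mulVec_single_false_allUp u id Function.injective_id

theorem Tmono_apply_true_allUp_true (N : ℕ) (u : ℂ) (s : Conf N) :
    Tmono N u (true, allUp N) (true, s) = if s = allUp N then aF u ^ N else 0 := by
  split_ifs with hs
  · subst hs
    simpa using congrFun (Tmono_mulVec_single_true_allUp N u) (true, allUp N)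
  · refine Tmono_apply_eq_zero_of_totalUpCount_ne u ?_
    have := upCount_lt_of_ne_allUp hs
    simp only [totalUpCount, upCount_allUp]
    omega

theorem Tmono_apply_false_allUp_false (N : ℕ) (u : ℂ) (s : Conf N) :
    Tmono N u (false, allUp N) (false, s) = if s = allUp N then bF u ^ N else 0 := by
  split_ifs with hs
  · subst hs
    simpa [Pi.single_apply] using congrFun (Tmono_mulVec_single_false_allUp N u) (false, allUp N)
  · refine Tmono_apply_eq_zero_of_totalUpCount_ne u ?_
    have := upCount_lt_of_ne_allUp hs
    simp only [totalUpCount, upCount_allUp]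
    omega

theorem Tmono_apply_true_oneDown_false (N : ℕ) (u : ℂ) (k : Fin N) (s : Conf N) :
    Tmono N u (true, oneDown k) (false, s) =
      if s = allUp N then aF u ^ (k : ℕ) * bF u ^ (N - 1 - k) else 0 := by
  split_ifs with hs
  · subst hs
    simpa [Pi.single_apply, oneDown_injective.eq_iff] using
      congrFun (Tmono_mulVec_single_false_allUp N u) (true, oneDown k)
  · refine Tmono_apply_eq_zero_of_totalUpCount_ne u ?_
    have := upCount_lt_of_ne_allUp hs
    have := k.pos
    simp only [totalUpCount, upCount_oneDown, Bool.toNat_true, Bool.toNat_false]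
    omega

theorem R0i_transpose {N : ℕ} (u : ℂ) (i : Fin N) : (R0i N u i)ᵀ = R0i N u i := by
  ext x y
  simp only [Matrix.transpose_apply, R0i, Matrix.of_apply, eq_comm (a := y.2 _)]
  rw [← Matrix.transpose_apply (Rm u), Rm_transpose]

theorem Ri0_eq_R0i {N : ℕ} (u : ℂ) (i : Fin N) : Ri0 N u i = R0i N u i := by
  ext x y
  simp only [Ri0, R0i, Matrix.of_apply, Rm_apply_swap]

theorem Tbar_eq_transpose_Tmono (N : ℕ) (u : ℂ) : Tbar N u = (Tmono N u)ᵀ := by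
  simp only [Tbar, Tmono, Matrix.transpose_list_prod, List.map_ofFn, Function.comp_def,
    R0i_transpose, Ri0_eq_R0i]

theorem K0m_eq_diagonal (N : ℕ) (u : ℂ) : K0m N u = Matrix.diagonal fun x => Km u x.1 x.1 := by
  ext ⟨p, s⟩ ⟨q, t⟩
  by_cases hst : s = t <;> by_cases hpq : p = q <;> simp [K0m, Km, hst, hpq]

theorem Umono_mulVec (N : ℕ) (u : ℂ) (v : Bool × Conf N → ℂ) :
    Umono N u *ᵥ v =
      (Matrix.diagonal (fun x => Km u x.1 x.1) *ᵥ (Tmono N u *ᵥ v)) ᵥ* Tmono N u := by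
  rw [Umono, Tbar_eq_transpose_Tmono, K0m_eq_diagonal, ← Matrix.mulVec_mulVec,
    ← Matrix.mulVec_mulVec, Matrix.mulVec_transpose]

theorem Umono_mulVec_single_true_allUp (N : ℕ) (u : ℂ) :
    Umono N u *ᵥ Pi.single (true, allUp N) 1 = (aF u ^ N * dF u) • Tmono N u (true, allUp N) := by
  rw [Umono_mulVec, Tmono_mulVec_single_true_allUp, Matrix.mulVec_smul,
    Matrix.diagonal_mulVec_single, Matrix.smul_vecMul, Matrix.single_vecMul]
  simp [Km, smul_smul, Matrix.row_def]

theorem Umono_mulVec_single_false_allUp (N : ℕ) (u : ℂ) :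
    Umono N u *ᵥ Pi.single (false, allUp N) 1 =
      (bF u ^ N * -aF u) • Tmono N u (false, allUp N) +
        ∑ k : Fin N,
          (aF u ^ (k : ℕ) * bF u ^ (N - 1 - k) * dF u) • Tmono N u (true, oneDown k) := by
  rw [Umono_mulVec, Tmono_mulVec_single_false_allUp]
  simp only [Matrix.mulVec_add, Matrix.mulVec_sum, Matrix.mulVec_smul,
    Matrix.diagonal_mulVec_single, Matrix.add_vecMul, Matrix.sum_vecMul, Matrix.smul_vecMul,
    Matrix.single_vecMul, Matrix.row_def, Km, Matrix.of_apply, if_true, Bool.false_eq_true, if_false, mul_one, smul_smul]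

def vacuumEigenvalueA (N : ℕ) (u : ℂ) : ℂ := aF u ^ N * dF u * aF u ^ N

/-- `⟨T (v₋ ⊗ Ω), K⁻ T (v₋ ⊗ Ω)⟩`, read off from `Tmono_mulVec_single_false_allUp` with
`K⁻ = diag(d, -a)`. -/
def vacuumEigenvalueD (N : ℕ) (u : ℂ) : ℂ :=
  bF u ^ N * -aF u * bF u ^ N +
    ∑ k : Fin N, aF u ^ (k : ℕ) * bF u ^ (N - 1 - k) * dF u * (aF u ^ (k : ℕ) * bF u ^ (N - 1 - k))

theorem Aop_mulVec_Omega (N : ℕ) (u : ℂ) :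
    Aop N u *ᵥ Omega N = vacuumEigenvalueA N u • Omega N := by
  funext s
  have hcol : (Aop N u *ᵥ Omega N) s = (Umono N u *ᵥ Pi.single (true, allUp N) 1) (true, s) := by
    simp only [Omega_eq_single, Matrix.mulVec_single_one]
    rfl
  rw [hcol, Umono_mulVec_single_true_allUp, Pi.smul_apply, Tmono_apply_true_allUp_true]
  simp [Omega_eq_single, Pi.single_apply, vacuumEigenvalueA]

theorem Dop_mulVec_Omega (N : ℕ) (u : ℂ) :
    Dop N u *ᵥ Omega N = vacuumEigenvalueD N u • Omega N := by
  funext s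
  have hcol : (Dop N u *ᵥ Omega N) s = (Umono N u *ᵥ Pi.single (false, allUp N) 1) (false, s) := by
    simp only [Omega_eq_single, Matrix.mulVec_single_one]
    rfl
  rw [hcol, Umono_mulVec_single_false_allUp]
  simp only [Pi.add_apply, Pi.smul_apply, Finset.sum_apply, smul_eq_mul,
    Tmono_apply_false_allUp_false, Tmono_apply_true_oneDown_false]
  split_ifs with hs <;> simp [Omega_eq_single, hs, vacuumEigenvalueD]

theorem sinh_eta_ne_zero : Complex.sinh ηc ≠ 0 := by
  have h : ηc = ((2 * Real.pi / 3 : ℝ) : ℂ) * Complex.I := by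
    rw [ηc]
    push_cast
    ring
  rw [h, Complex.sinh_mul_I, ← Complex.ofReal_sin]
  refine mul_ne_zero (Complex.ofReal_ne_zero.mpr (Real.sin_pos_of_pos_of_lt_pi ?_ ?_).ne') I_ne_zero
  · positivity
  · linarith [Real.pi_pos]

theorem sinh_add_sq_sub_sinh_sq (v w : ℂ) :
    Complex.sinh (v + w) ^ 2 - Complex.sinh v ^ 2 = Complex.sinh (2 * v + w) * Complex.sinh w := by
  simp only [two_mul, Complex.sinh_add, Complex.cosh_add]
  linear_combination Complex.sinh v ^ 2 * Complex.cosh_sq_sub_sinh_sq w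

theorem sinh_two_mul_add_mul_sinh_add_add_sinh_sub_mul_sinh (v w : ℂ) :
    Complex.sinh (2 * v + w) * Complex.sinh (v + w) + Complex.sinh (v - w) * Complex.sinh w =
      Complex.sinh (2 * v) * Complex.sinh (v + 2 * w) := by
  simp only [two_mul, Complex.sinh_add, Complex.cosh_add, Complex.sinh_sub]
  linear_combination (Complex.cosh v * Complex.sinh w ^ 2 -
    Complex.sinh v * Complex.sinh w * Complex.cosh w) * Complex.cosh_sq_sub_sinh_sq v

theorem sinh_mul_vacuumEigenvalueD_sub_sinh_mul_vacuumEigenvalueA (N : ℕ) (u : ℂ) :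
    Complex.sinh (2 * u + ηc) * vacuumEigenvalueD N u - Complex.sinh ηc * vacuumEigenvalueA N u
      = -(bF u ^ (2 * N)) * Complex.sinh (2 * u) * Complex.sinh (u + 2 * ηc) / Complex.sinh ηc := by
  have hη := sinh_eta_ne_zero
  have hsq : Complex.sinh (2 * u + ηc) = (aF u ^ 2 - bF u ^ 2) * Complex.sinh ηc := by
    rw [aF, bF, div_pow, div_pow, ← sub_div, sinh_add_sq_sub_sinh_sq]
    field_simp
  have hgeom : (∑ k : Fin N, aF u ^ (k : ℕ) * bF u ^ (N - 1 - k) * dF u *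
        (aF u ^ (k : ℕ) * bF u ^ (N - 1 - k))) * (aF u ^ 2 - bF u ^ 2) =
      dF u * (aF u ^ (2 * N) - bF u ^ (2 * N)) := by
    rw [pow_mul, pow_mul, ← geom_sum₂_mul (aF u ^ 2) (bF u ^ 2) N, ← mul_assoc, Finset.mul_sum,
      Fin.sum_univ_eq_sum_range
        (fun k => aF u ^ k * bF u ^ (N - 1 - k) * dF u * (aF u ^ k * bF u ^ (N - 1 - k)))]
    congr 1
    refine Finset.sum_congr rfl fun k _ => ?_
    ring
  have hkey := sinh_two_mul_add_mul_sinh_add_add_sinh_sub_mul_sinh u ηc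
  rw [← div_mul_cancel₀ (Complex.sinh (u + ηc)) hη, ← div_mul_cancel₀ (Complex.sinh (u - ηc)) hη,
    ← aF, ← dF] at hkey
  rw [vacuumEigenvalueD, vacuumEigenvalueA, eq_div_iff hη]
  linear_combination
    (Complex.sinh ηc * ∑ k : Fin N, aF u ^ (k : ℕ) * bF u ^ (N - 1 - k) * dF u *
      (aF u ^ (k : ℕ) * bF u ^ (N - 1 - k))) * hsq
    + Complex.sinh ηc ^ 2 * hgeom - bF u ^ (2 * N) * hkey

/-- pseudovacuum eigenvalues: for every `N = n+1 ≥ 1` and every `u ∈ ℂ`,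
`𝒜^(N)(u) Ω^(N) = Δ₊^(N)(u) Ω^(N)` and
`[sinh(2u+η) 𝒟^(N)(u) - sinh(η) 𝒜^(N)(u)] Ω^(N) = Δ₋^(N)(u) Ω^(N)`, with
`Δ₊^(N)(u) = a(u)^{2N} sinh(u-η)/sinh η` and
`Δ₋^(N)(u) = -b(u)^{2N} sinh(2u) sinh(u+2η)/sinh η`. -/
theorem pseudovacuum_eigenvalues (n : ℕ) (u : ℂ) :
    (Aop (n + 1) u).mulVec (Omega (n + 1))
        = (aF u ^ (2 * (n + 1)) * Complex.sinh (u - ηc) / Complex.sinh ηc) •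
            Omega (n + 1)
    ∧ (Complex.sinh (2 * u + ηc) • Dop (n + 1) u
          - Complex.sinh ηc • Aop (n + 1) u).mulVec (Omega (n + 1))
        = (-(bF u ^ (2 * (n + 1))) * Complex.sinh (2 * u) * Complex.sinh (u + 2 * ηc)
            / Complex.sinh ηc) • Omega (n + 1) := by
  constructor
  · rw [Aop_mulVec_Omega, vacuumEigenvalueA, dF]
    ring_nf
  · rw [Matrix.sub_mulVec, Matrix.smul_mulVec, Matrix.smul_mulVec, Dop_mulVec_Omega,
      Aop_mulVec_Omega, smul_smul, smul_smul, ← sub_smul,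
      sinh_mul_vacuumEigenvalueD_sub_sinh_mul_vacuumEigenvalueA]
end
end
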